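/- arXiv:2511.05132 — 4 statements merged into one kernel-verified Lean document; each statement's English description precedes it below -/
import Mathlib

section
/- Let M ∈ ℝ^{N×N} be symmetric with eigen-decomposition M = Qᵀ D Q, where Q is orthogonal and D = diag(λ₁, …, λ_N) with λ₁ ≥ λ₂ ≥ ⋯ ≥ λ_N. Fix 1 ≤ r ≤ N. Let λᵢ⁺ = max{0, λᵢ}, let D⁺ = diag(λ₁⁺, …, λ_r⁺, 0, …, 0), and let M⁺ = Qᵀ D⁺ Q. Then M⁺ is symmetric positive semidefinite with rank at most r, and for every symmetric positive semidefinite matrix M' ∈ ℝ^{N×N} with rank(M') ≤ r, ‖M⁺ − M‖_F ≤ ‖M' − M‖_F. That is, M⁺ minimizes the Frobenius distance to M over the set of positive semidefinite matrices of rank at most r. -/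
open Matrix BigOperators


section FrobAux

variable {N : ℕ}

noncomputable def fsq (X : Matrix (Fin N) (Fin N) ℝ) : ℝ := ∑ i, ∑ j, X i j ^ 2

noncomputable def finn (X Y : Matrix (Fin N) (Fin N) ℝ) : ℝ := ∑ i, ∑ j, X i j * Y i j

lemma fsq_eq_inn (X : Matrix (Fin N) (Fin N) ℝ) : fsq X = finn X X := by
  simp [fsq, finn, pow_two]

lemma finn_eq_trace (X Y : Matrix (Fin N) (Fin N) ℝ) : finn X Y = (Xᵀ * Y).trace := by
  simp only [finn, trace, diag, Matrix.mul_apply, transpose_apply]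
  exact Finset.sum_comm

lemma fsq_add (X Y : Matrix (Fin N) (Fin N) ℝ) :
    fsq (X + Y) = fsq X + 2 * finn X Y + fsq Y := by
  simp only [fsq, finn, Matrix.add_apply, Finset.mul_sum, ← Finset.sum_add_distrib]
  exact Finset.sum_congr rfl fun i _ => Finset.sum_congr rfl fun j _ => by ring

lemma fsq_neg (X : Matrix (Fin N) (Fin N) ℝ) : fsq (-X) = fsq X := by
  simp [fsq]

lemma fsqnn (X : Matrix (Fin N) (Fin N) ℝ) : 0 ≤ fsq X :=
  Finset.sum_nonneg fun i _ => Finset.sum_nonneg fun j _ => sq_nonneg _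

lemma fsq_diagonal (v : Fin N → ℝ) : fsq (diagonal v) = ∑ i, v i ^ 2 := by
  unfold fsq
  refine Finset.sum_congr rfl fun i _ => ?_
  rw [Finset.sum_eq_single i]
  · simp
  · intro j _ hj; simp [diagonal_apply, (Ne.symm hj)]
  · simp

lemma finn_diagonal (X : Matrix (Fin N) (Fin N) ℝ) (v : Fin N → ℝ) :
    finn X (diagonal v) = ∑ i, X i i * v i := by
  unfold finn
  refine Finset.sum_congr rfl fun i _ => ?_
  rw [Finset.sum_eq_single i]
  · simp
  · intro j _ hj; simp [diagonal_apply, (Ne.symm hj)]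
  · simp

lemma fsq_conj (Q X : Matrix (Fin N) (Fin N) ℝ) (h1 : Qᵀ * Q = 1) :
    fsq (Qᵀ * X * Q) = fsq X := by
  have h2 : Q * Qᵀ = 1 := mul_eq_one_comm.mp h1
  rw [fsq_eq_inn, fsq_eq_inn, finn_eq_trace, finn_eq_trace]
  have e1 : (Qᵀ * X * Q)ᵀ * (Qᵀ * X * Q) = Qᵀ * (Xᵀ * (X * Q)) := by
    simp only [transpose_mul, transpose_transpose, Matrix.mul_assoc]
    rw [← Matrix.mul_assoc Q Qᵀ, h2, Matrix.one_mul]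
  rw [e1, trace_mul_comm]
  simp only [Matrix.mul_assoc]
  rw [h2, Matrix.mul_one]

lemma psd_diag_nonneg {A : Matrix (Fin N) (Fin N) ℝ} (hA : A.PosSemidef) (i : Fin N) :
    0 ≤ A i i := by
  simpa using hA.2 (Finsupp.single i 1)



lemma key_sum (r : ℕ) (d t : Fin N → ℝ) (hd0 : ∀ i, 0 ≤ d i)
    (hdm : ∀ i j : Fin N, i ≤ j → d j ≤ d i)
    (ht0 : ∀ i, 0 ≤ t i) (ht1 : ∀ i, t i ≤ 1)
    (htsum : (N : ℝ) - r ≤ ∑ i, t i) :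
    (∑ i : Fin N, if (i : ℕ) < r then 0 else d i) ≤ ∑ i, d i * t i := by
  have hrw : (∑ i : Fin N, if (i : ℕ) < r then (0:ℝ) else d i)
      = ∑ i ∈ Finset.univ.filter (fun i : Fin N => ¬ (i : ℕ) < r), d i := by
    rw [Finset.sum_filter]
    exact Finset.sum_congr rfl fun i _ => by by_cases h : (i : ℕ) < r <;> simp [h]
  rcases lt_or_ge r N with hrN | hNr
  swap
  · rw [hrw]
    have he : Finset.univ.filter (fun i : Fin N => ¬ (i : ℕ) < r) = ∅ := by
      apply Finset.filter_false_of_mem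
      intro i _
      simp [lt_of_lt_of_le i.isLt hNr]
    rw [he, Finset.sum_empty]
    exact Finset.sum_nonneg fun i _ => mul_nonneg (hd0 i) (ht0 i)
  · set ρ : Fin N := ⟨r, hrN⟩ with hρ
    have hfe : Finset.univ.filter (fun i : Fin N => ¬ (i : ℕ) < r) = Finset.Ici ρ := by
      ext i
      simp [Fin.le_def, Nat.not_lt, hρ]
    set A := Finset.univ.filter (fun i : Fin N => (i : ℕ) < r) with hA
    have hsplit : ∀ f : Fin N → ℝ,
        ∑ i, f i = ∑ i ∈ A, f i + ∑ i ∈ Finset.Ici ρ, f i := by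
      intro f
      rw [← hfe, hA]
      exact (Finset.sum_filter_add_sum_filter_not _ _ f).symm
    have hcard : ((Finset.Ici ρ).card : ℝ) = (N : ℝ) - r := by
      rw [Fin.card_Ici]
      rw [show (ρ : ℕ) = r from rfl]
      push_cast [Nat.cast_sub hrN.le]
      ring
    have hdρ0 : 0 ≤ d ρ := hd0 ρ
    -- I2 : ∑_{Ici} (1 - t) ≤ ∑_A t
    have I2 : ∑ i ∈ Finset.Ici ρ, (1 - t i) ≤ ∑ i ∈ A, t i := by
      have e : ∑ i ∈ Finset.Ici ρ, (1 - t i)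
          = ((Finset.Ici ρ).card : ℝ) - ∑ i ∈ Finset.Ici ρ, t i := by
        rw [Finset.sum_sub_distrib, Finset.sum_const, nsmul_eq_mul, mul_one]
      rw [e, hcard]
      have := hsplit t
      linarith
    have I1 : ∑ i ∈ Finset.Ici ρ, d i * (1 - t i) ≤ d ρ * ∑ i ∈ Finset.Ici ρ, (1 - t i) := by
      rw [Finset.mul_sum]
      refine Finset.sum_le_sum fun i hi => ?_
      have hρi : ρ ≤ i := Finset.mem_Ici.mp hi
      exact mul_le_mul_of_nonneg_right (hdm ρ i hρi) (by linarith [ht1 i])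
    have I3 : d ρ * ∑ i ∈ A, t i ≤ ∑ i ∈ A, d i * t i := by
      rw [Finset.mul_sum]
      refine Finset.sum_le_sum fun i hi => ?_
      have hiρ : i ≤ ρ := by
        have := (Finset.mem_filter.mp hi).2
        exact le_of_lt (by exact Fin.lt_def.mpr this)
      exact mul_le_mul_of_nonneg_right (hdm i ρ hiρ) (ht0 i)
    have I2' : d ρ * ∑ i ∈ Finset.Ici ρ, (1 - t i) ≤ d ρ * ∑ i ∈ A, t i :=
      mul_le_mul_of_nonneg_left I2 hdρ0
    have E2 : ∑ i ∈ Finset.Ici ρ, d i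
        = ∑ i ∈ Finset.Ici ρ, d i * t i + ∑ i ∈ Finset.Ici ρ, d i * (1 - t i) := by
      rw [← Finset.sum_add_distrib]
      exact Finset.sum_congr rfl fun i _ => by ring
    have E1 := hsplit (fun i => d i * t i)
    rw [hrw, hfe]
    linarith

lemma fsq_split (X P : Matrix (Fin N) (Fin N) ℝ) (hPP : P * P = P) (hPt : Pᵀ = P) :
    fsq (X * P) ≤ fsq X := by
  have hX : X = X * P + X * (1 - P) := by
    rw [Matrix.mul_sub, Matrix.mul_one]
    abel
  have horth : finn (X * P) (X * (1 - P)) = 0 := by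
    rw [finn_eq_trace]
    have : (X * P)ᵀ * (X * (1 - P)) = Pᵀ * (Xᵀ * X * (1 - P)) := by
      simp only [transpose_mul, Matrix.mul_assoc]
    rw [this, trace_mul_comm, hPt]
    have : Xᵀ * X * (1 - P) * P = 0 := by
      rw [Matrix.mul_assoc, Matrix.sub_mul, Matrix.one_mul, hPP, sub_self, Matrix.mul_zero]
    rw [this, trace_zero]
  calc fsq (X * P) ≤ fsq (X * P) + fsq (X * (1 - P)) := le_add_of_nonneg_right (fsqnn _)
    _ = fsq (X * P + X * (1 - P)) := by rw [fsq_add, horth]; ring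
    _ = fsq X := by rw [← hX]

lemma eckart (r : ℕ) (c : Fin N → ℝ) (hc0 : ∀ i, 0 ≤ c i)
    (hcm : ∀ i j : Fin N, i ≤ j → c j ≤ c i)
    (B : Matrix (Fin N) (Fin N) ℝ) (hB : B.PosSemidef) (hBr : B.rank ≤ r) :
    (∑ i : Fin N, if (i : ℕ) < r then 0 else c i ^ 2) ≤ fsq (B - diagonal c) := by
  classical
  have hH : B.IsHermitian := hB.1
  set μ : Fin N → ℝ := hH.eigenvalues with hμ
  set U : Matrix (Fin N) (Fin N) ℝ := (hH.eigenvectorUnitary : Matrix (Fin N) (Fin N) ℝ) with hU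
  have hU2 : U * star U = 1 := Matrix.mem_unitaryGroup_iff.mp (hH.eigenvectorUnitary).2
  have hU1 : star U * U = 1 := Matrix.mem_unitaryGroup_iff'.mp (hH.eigenvectorUnitary).2
  have hspec : B = U * diagonal μ * star U := by
    have := hH.spectral_theorem
    simpa using this
  set e : Fin N → ℝ := fun i => if μ i = 0 then 1 else 0 with he
  set P : Matrix (Fin N) (Fin N) ℝ := U * diagonal e * star U with hP
  have hBP : B * P = 0 := by
    rw [hspec, hP]
    calc U * diagonal μ * star U * (U * diagonal e * star U)
        = U * (diagonal μ * (star U * U) * diagonal e) * star U := by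
          simp only [Matrix.mul_assoc]
      _ = U * (diagonal μ * diagonal e) * star U := by rw [hU1]; simp [Matrix.mul_assoc]
      _ = 0 := by
          rw [diagonal_mul_diagonal]
          have : (fun i => μ i * e i) = fun _ => (0:ℝ) := by
            funext i; by_cases h : μ i = 0 <;> simp [he, h]
          rw [this, diagonal_zero]
          simp
  have hPP : P * P = P := by
    rw [hP]
    calc U * diagonal e * star U * (U * diagonal e * star U)
        = U * (diagonal e * (star U * U) * diagonal e) * star U := by
          simp only [Matrix.mul_assoc]
      _ = U * (diagonal e * diagonal e) * star U := by rw [hU1]; simp [Matrix.mul_assoc]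
      _ = U * diagonal e * star U := by
          have hee : (fun i => e i * e i) = e := by
            funext i; by_cases h : μ i = 0 <;> simp [he, h]
          rw [diagonal_mul_diagonal, hee]
  have hPpsd : P.PosSemidef := by
    have hd : (diagonal e).PosSemidef :=
      Matrix.PosSemidef.diagonal (fun i => by by_cases h : μ i = 0 <;> simp [he, h])
    have := hd.mul_mul_conjTranspose_same U
    rwa [← Matrix.star_eq_conjTranspose] at this
  have hPsym : Pᵀ = P := by
    have := hPpsd.1
    rwa [Matrix.IsHermitian, conjTranspose_eq_transpose_of_trivial] at this
  have h1Ppsd : (1 - P).PosSemidef := by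
    have hd : (diagonal (fun i => 1 - e i)).PosSemidef :=
      Matrix.PosSemidef.diagonal (fun i => by by_cases h : μ i = 0 <;> simp [he, h])
    have h2 := hd.mul_mul_conjTranspose_same U
    rw [← Matrix.star_eq_conjTranspose] at h2
    have : U * diagonal (fun i => 1 - e i) * star U = 1 - P := by
      have : diagonal (fun i => 1 - e i) = 1 - diagonal e := by
        rw [← diagonal_one, diagonal_sub]
      rw [this, Matrix.mul_sub, Matrix.mul_one, Matrix.sub_mul, hU2, hP]
    rwa [this] at h2
  set t : Fin N → ℝ := fun i => P i i with ht
  have ht0 : ∀ i, 0 ≤ t i := fun i => psd_diag_nonneg hPpsd i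
  have ht1 : ∀ i, t i ≤ 1 := by
    intro i
    have := psd_diag_nonneg h1Ppsd i
    simp only [Matrix.sub_apply, Matrix.one_apply_eq] at this
    linarith
  -- trace P = number of zero eigenvalues ≥ N - r
  have htsum : (N : ℝ) - r ≤ ∑ i, t i := by
    have htr : ∑ i, t i = ∑ i, e i := by
      have h1 : ∑ i, t i = P.trace := by simp [ht, Matrix.trace, Matrix.diag]
      have h2 : P.trace = (diagonal e).trace := by
        rw [hP, trace_mul_comm, ← Matrix.mul_assoc, hU1, Matrix.one_mul]
      rw [h1, h2]
      simp [Matrix.trace, Matrix.diag]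
    have hcount : ∑ i, e i = ((Finset.univ.filter (fun i => μ i = 0)).card : ℝ) := by
      rw [he]
      simp [Finset.sum_boole]
    have hrank : B.rank = (Finset.univ.filter (fun i => μ i ≠ 0)).card := by
      rw [hH.rank_eq_card_non_zero_eigs, Fintype.card_subtype]
    have hcards : (Finset.univ.filter (fun i => μ i = 0)).card
        + (Finset.univ.filter (fun i => μ i ≠ 0)).card = N := by
      rw [Finset.card_filter_add_card_filter_not]
      simp
    have hge : N ≤ (Finset.univ.filter (fun i => μ i = 0)).card + r := by omega
    rw [htr, hcount]
    have : (N : ℝ) ≤ ((Finset.univ.filter (fun i => μ i = 0)).card : ℝ) + r := by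
      exact_mod_cast hge
    linarith
  -- main chain
  have hmain : fsq ((B - diagonal c) * P) = ∑ i, c i ^ 2 * t i := by
    have h1 : (B - diagonal c) * P = -(diagonal c * P) := by
      rw [Matrix.sub_mul, hBP]
      simp
    rw [h1, fsq_neg, fsq_eq_inn, finn_eq_trace]
    have h2 : (diagonal c * P)ᵀ * (diagonal c * P)
        = P * (diagonal (fun i => c i * c i) * P) := by
      rw [transpose_mul, hPsym, diagonal_transpose]
      simp only [Matrix.mul_assoc]
      rw [← Matrix.mul_assoc (diagonal c) (diagonal c) P, diagonal_mul_diagonal]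
    rw [h2, trace_mul_comm, Matrix.mul_assoc, hPP]
    simp only [Matrix.trace, Matrix.diag, Matrix.diagonal_mul]
    exact Finset.sum_congr rfl fun i _ => by rw [ht]; ring
  have hkey := key_sum r (fun i => c i ^ 2) t
    (fun i => sq_nonneg _)
    (fun i j hij => pow_le_pow_left₀ (hc0 j) (hcm i j hij) 2)
    ht0 ht1 htsum
  calc (∑ i : Fin N, if (i : ℕ) < r then 0 else c i ^ 2)
      ≤ ∑ i, c i ^ 2 * t i := hkey
    _ = fsq ((B - diagonal c) * P) := hmain.symm
    _ ≤ fsq (B - diagonal c) := fsq_split _ _ hPP hPsym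

end FrobAux

/-- Frobenius norm of a real matrix. -/
noncomputable def frobNorm {m n : ℕ} (A : Matrix (Fin m) (Fin n) ℝ) : ℝ :=
  Real.sqrt (∑ i, ∑ j, A i j ^ 2)

/-- Truncated eigenvalue decomposition computes the Frobenius-norm projection
onto the set of PSD matrices of rank at most `r`. -/
theorem stmt1 (N r : ℕ) (hr1 : 1 ≤ r) (hrN : r ≤ N)
    (M Q : Matrix (Fin N) (Fin N) ℝ) (lam : Fin N → ℝ)
    (hsym : M.IsSymm) (hQ : Qᵀ * Q = 1)
    (hdec : M = Qᵀ * Matrix.diagonal lam * Q)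
    (hmono : ∀ i j : Fin N, i ≤ j → lam j ≤ lam i)
    (Mplus : Matrix (Fin N) (Fin N) ℝ)
    (hMplus : Mplus =
      Qᵀ * Matrix.diagonal (fun i : Fin N => if (i : ℕ) < r then max 0 (lam i) else 0) * Q) :
    Mplus.PosSemidef ∧ Mplus.rank ≤ r ∧
      ∀ M' : Matrix (Fin N) (Fin N) ℝ, M'.PosSemidef → M'.rank ≤ r →
        frobNorm (Mplus - M) ≤ frobNorm (M' - M) := by
  classical
  have hQH : Qᴴ = Qᵀ := conjTranspose_eq_transpose_of_trivial Q
  set dp : Fin N → ℝ := fun i : Fin N => if (i : ℕ) < r then max 0 (lam i) else 0 with hdp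
  have hdpp : (Matrix.diagonal dp).PosSemidef :=
    Matrix.PosSemidef.diagonal (fun i => by
      by_cases h : (i : ℕ) < r <;> simp [hdp, h, le_max_left])
  have psd : Mplus.PosSemidef := by
    rw [hMplus, ← hQH]
    exact hdpp.conjTranspose_mul_mul_same Q
  have hrank : Mplus.rank ≤ r := by
    have h1 : Mplus.rank ≤ (Matrix.diagonal dp).rank := by
      rw [hMplus]
      exact le_trans (rank_mul_le_left _ _) (rank_mul_le_right _ _)
    have h2 : (Matrix.diagonal dp).rank ≤ r := by
      rw [Matrix.rank_diagonal]
      have hlt : ∀ i : {i : Fin N // dp i ≠ 0}, ((i : Fin N) : ℕ) < r := by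
        rintro ⟨i, hi⟩
        by_contra h
        exact hi (by simp [hdp, h])
      have hinj : Function.Injective (fun i : {i : Fin N // dp i ≠ 0} =>
          (⟨((i : Fin N) : ℕ), hlt i⟩ : Fin r)) := by
        rintro ⟨i, hi⟩ ⟨j, hj⟩ h
        simp only [Fin.mk.injEq] at h
        exact Subtype.ext (Fin.ext h)
      simpa using Fintype.card_le_of_injective _ hinj
    exact le_trans h1 h2
  refine ⟨psd, hrank, ?_⟩
  intro M' hM' hM'r
  set B := Q * M' * Qᵀ with hB
  have hBpsd : B.PosSemidef := by
    have := hM'.mul_mul_conjTranspose_same Q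
    rwa [hQH] at this
  have hBrank : B.rank ≤ r :=
    le_trans (le_trans (rank_mul_le_left _ _) (rank_mul_le_right _ _)) hM'r
  have hM'eq : M' = Qᵀ * B * Q := by
    rw [hB]
    simp only [Matrix.mul_assoc]
    rw [hQ, Matrix.mul_one, ← Matrix.mul_assoc, hQ, Matrix.one_mul]
  have hdiff1 : Mplus - M = Qᵀ * (diagonal dp - diagonal lam) * Q := by
    rw [hMplus, hdec, Matrix.mul_sub, Matrix.sub_mul]
  have hdiff2 : M' - M = Qᵀ * (B - diagonal lam) * Q := by
    rw [hM'eq]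
    nth_rewrite 1 [hdec]
    rw [Matrix.mul_sub, Matrix.sub_mul]
  -- positive and negative parts
  set c : Fin N → ℝ := fun i => max 0 (lam i) with hc
  set nn : Fin N → ℝ := fun i => max 0 (-lam i) with hnn
  have hcn : ∀ i, c i - nn i = lam i := by
    intro i
    rcases le_total 0 (lam i) with h | h
    · rw [hc, hnn]; simp only []
      rw [max_eq_right h, max_eq_left (by linarith : -lam i ≤ 0)]; ring
    · rw [hc, hnn]; simp only []
      rw [max_eq_left h, max_eq_right (by linarith : 0 ≤ -lam i)]; ring
  have hc0 : ∀ i, 0 ≤ c i := fun i => le_max_left _ _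
  have hn0 : ∀ i, 0 ≤ nn i := fun i => le_max_left _ _
  have hcn0 : ∀ i, c i * nn i = 0 := by
    intro i
    rcases le_total 0 (lam i) with h | h
    · rw [hnn]; simp only []
      rw [max_eq_left (by linarith : -lam i ≤ 0), mul_zero]
    · rw [hc]; simp only []
      rw [max_eq_left h, zero_mul]
  have hcm : ∀ i j : Fin N, i ≤ j → c j ≤ c i := fun i j h =>
    max_le_max le_rfl (hmono i j h)
  -- LHS value
  have hL : fsq (diagonal dp - diagonal lam)
      = ∑ i, (nn i ^ 2 + if (i : ℕ) < r then 0 else c i ^ 2) := by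
    rw [diagonal_sub, fsq_diagonal]
    refine Finset.sum_congr rfl fun i _ => ?_
    by_cases h : (i : ℕ) < r
    · have hdpi : dp i = c i := by simp [hdp, hc, h]
      simp only [Pi.sub_apply, hdpi, h, if_true, add_zero]
      rw [← hcn i]
      ring
    · have hdpi : dp i = 0 := by simp [hdp, h]
      simp only [Pi.sub_apply, hdpi, h, if_false]
      rw [← hcn i]
      linear_combination (-2 : ℝ) * hcn0 i
  -- RHS lower bound
  have hBD : B - diagonal lam = (B - diagonal c) + diagonal nn := by
    have : diagonal lam = diagonal c - diagonal nn := by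
      rw [diagonal_sub]
      exact (congrArg diagonal (funext fun i => (hcn i).symm) : _)
    rw [this]
    abel
  have hR : fsq (B - diagonal lam)
      = fsq (B - diagonal c) + 2 * finn (B - diagonal c) (diagonal nn) + ∑ i, nn i ^ 2 := by
    rw [hBD, fsq_add, fsq_diagonal]
  have hinn : 0 ≤ finn (B - diagonal c) (diagonal nn) := by
    rw [finn_diagonal]
    refine Finset.sum_nonneg fun i _ => ?_
    have hii : (B - diagonal c) i i = B i i - c i := by
      simp [Matrix.sub_apply]
    rw [hii, sub_mul, hcn0 i, sub_zero]
    exact mul_nonneg (psd_diag_nonneg hBpsd i) (hn0 i)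
  have heck := eckart r c hc0 hcm B hBpsd hBrank
  have key : fsq (diagonal dp - diagonal lam) ≤ fsq (B - diagonal lam) := by
    rw [hL, hR]
    have hsum : ∑ i, (nn i ^ 2 + if (i : ℕ) < r then 0 else c i ^ 2)
        = (∑ i : Fin N, if (i : ℕ) < r then (0:ℝ) else c i ^ 2) + ∑ i, nn i ^ 2 := by
      rw [← Finset.sum_add_distrib]
      exact Finset.sum_congr rfl fun i _ => add_comm _ _
    rw [hsum]
    linarith
  calc frobNorm (Mplus - M)
      = Real.sqrt (fsq (Qᵀ * (diagonal dp - diagonal lam) * Q)) := by rw [hdiff1]; rfl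
    _ = Real.sqrt (fsq (diagonal dp - diagonal lam)) := by rw [fsq_conj _ _ hQ]
    _ ≤ Real.sqrt (fsq (B - diagonal lam)) := Real.sqrt_le_sqrt key
    _ = Real.sqrt (fsq (Qᵀ * (B - diagonal lam) * Q)) := by rw [fsq_conj _ _ hQ]
    _ = frobNorm (M' - M) := by rw [hdiff2]; rfl
end

section
/- Let λ₁ ≥ λ₂ ≥ ⋯ ≥ λ_N be real numbers and let 1 ≤ r ≤ N. Consider minimizing Σ_{i=1}^N (λᵢ − yᵢ)² over vectors y ∈ ℝᴺ with yᵢ ≥ 0 for all i and at most r nonzero entries. Then the vector y⋆ with y⋆ᵢ = max{0, λᵢ} for i ≤ r and y⋆ᵢ = 0 for i > r is a minimizer, i.e., Σ_{i=1}^N (λᵢ − y⋆ᵢ)² ≤ Σ_{i=1}^N (λᵢ − yᵢ)² for every feasible y. -/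
open BigOperators Finset

/-- A strictly monotone map `Fin s → Fin N` satisfies `k ≤ f k`. -/
lemma aux_le_apply {s N : ℕ} (f : Fin s → Fin N) (hf : StrictMono f) (k : Fin s) :
    (k : ℕ) ≤ (f k : ℕ) := by
  suffices h : ∀ n, ∀ k : Fin s, (k : ℕ) = n → n ≤ (f k : ℕ) from h _ k rfl
  intro n
  induction n with
  | zero => intro k _; exact Nat.zero_le _
  | succ n ih =>
    intro k hk
    have hks := k.2
    have hlt : n < s := by omega
    have h1 : (f ⟨n, hlt⟩ : ℕ) < (f k : ℕ) := hf (by simp [Fin.lt_def, hk])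
    have h2 : n ≤ (f ⟨n, hlt⟩ : ℕ) := ih ⟨n, hlt⟩ rfl
    omega

/-- Sum over a Fin-indexed enumeration of a finset. -/
lemma aux_sum_enum {N s : ℕ} (p : Fin N → ℝ) (S : Finset (Fin N)) (h : S.card = s) :
    ∑ i ∈ S, p i = ∑ k : Fin s, p (S.orderEmbOfFin h k) := by
  classical
  refine (Finset.sum_bij (fun (k : Fin s) _ => S.orderEmbOfFin h k) ?_ ?_ ?_ ?_).symm
  · intro k _; exact S.orderEmbOfFin_mem _ k
  · intro a _ b _ hab; exact (S.orderEmbOfFin h).injective hab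
  · intro b hb
    have : b ∈ Set.range (S.orderEmbOfFin h) := by rw [S.range_orderEmbOfFin]; exact hb
    obtain ⟨k, hk⟩ := this
    exact ⟨k, Finset.mem_univ _, hk⟩
  · intro k _; rfl

/-- For an antitone nonnegative `p : Fin N → ℝ`, the sum over any set of card `≤ r`
is at most the sum over the first `r` indices. -/
lemma aux_sum_le {N r : ℕ} (hrN : r ≤ N) (p : Fin N → ℝ)
    (hpanti : ∀ i j : Fin N, i ≤ j → p j ≤ p i) (hpnn : ∀ i, 0 ≤ p i)
    (S : Finset (Fin N)) (hS : S.card ≤ r) :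
    ∑ i ∈ S, p i ≤ ∑ i ∈ Finset.univ.filter (fun i : Fin N => (i : ℕ) < r), p i := by
  classical
  set s := S.card with hs
  set e := S.orderEmbOfFin (rfl : S.card = s) with he
  have hsN : s ≤ N := le_trans hS hrN
  have hsum1 : ∑ i ∈ S, p i = ∑ k : Fin s, p (e k) := aux_sum_enum p S rfl
  have hstep : ∑ k : Fin s, p (e k) ≤ ∑ k : Fin s, p (Fin.castLE hsN k) := by
    refine Finset.sum_le_sum fun k _ => hpanti _ _ ?_
    exact aux_le_apply e e.strictMono k
  have hsum2 : ∑ k : Fin s, p (Fin.castLE hsN k)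
      = ∑ i ∈ Finset.univ.filter (fun i : Fin N => (i : ℕ) < s), p i := by
    refine Finset.sum_bij (fun (k : Fin s) _ => Fin.castLE hsN k) ?_ ?_ ?_ ?_
    · intro k _; simp [Finset.mem_filter]
    · intro a _ b _ hab; exact Fin.castLE_injective hsN hab
    · intro b hb
      simp only [Finset.mem_filter, Finset.mem_univ, true_and] at hb
      exact ⟨⟨(b : ℕ), hb⟩, Finset.mem_univ _, by simp [Fin.ext_iff]⟩
    · intro k _; rfl
  rw [hsum1]
  refine hstep.trans ?_
  rw [hsum2]
  refine Finset.sum_le_sum_of_subset_of_nonneg ?_ fun i _ _ => hpnn i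
  intro i hi
  simp only [Finset.mem_filter, Finset.mem_univ, true_and] at *
  omega

/-- Diagonal reduction step: the nonnegative vector keeping the first `r`
positive parts of a sorted sequence minimizes the squared distance among
nonnegative vectors with at most `r` nonzero entries. -/
theorem stmt2 (N r : ℕ) (hr1 : 1 ≤ r) (hrN : r ≤ N) (lam : Fin N → ℝ)
    (hmono : ∀ i j : Fin N, i ≤ j → lam j ≤ lam i)
    (ystar : Fin N → ℝ)
    (hystar : ystar = fun i : Fin N => if (i : ℕ) < r then max 0 (lam i) else 0)
    (y : Fin N → ℝ) (hy : ∀ i, 0 ≤ y i)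
    (hsupp : {i : Fin N | y i ≠ 0}.ncard ≤ r) :
    ∑ i, (lam i - ystar i) ^ 2 ≤ ∑ i, (lam i - y i) ^ 2 := by
  classical
  set p : Fin N → ℝ := fun i => max 0 (lam i) ^ 2 with hp
  set mm : Fin N → ℝ := fun i => min (lam i) 0 ^ 2 with hmmdef
  have hpnn : ∀ i, 0 ≤ p i := fun i => sq_nonneg _
  have hpanti : ∀ i j : Fin N, i ≤ j → p j ≤ p i := by
    intro i j hij
    have h := hmono i j hij
    exact pow_le_pow_left₀ (le_max_left _ _) (max_le_max le_rfl h) 2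
  have hsq : ∀ i, lam i ^ 2 = mm i + p i := by
    intro i
    rcases le_or_gt (lam i) 0 with h | h
    · simp [hp, hmmdef, min_eq_left h, max_eq_left h]
    · simp [hp, hmmdef, min_eq_right h.le, max_eq_right h.le]
  have hL : ∀ i : Fin N, (lam i - ystar i) ^ 2
      = mm i + (if ¬ (i : ℕ) < r then p i else 0) := by
    intro i
    subst hystar
    by_cases hi : (i : ℕ) < r
    · simp only [hi, if_true, not_true, if_false]
      rcases le_or_gt (lam i) 0 with h | h
      · simp [hp, hmmdef, min_eq_left h, max_eq_left h]
      · simp [hp, hmmdef, min_eq_right h.le, max_eq_right h.le]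
    · simp only [hi, if_false, not_false_iff, if_true, sub_zero]
      exact hsq i
  have hR : ∀ i : Fin N, mm i + (if y i = 0 then p i else 0) ≤ (lam i - y i) ^ 2 := by
    intro i
    by_cases hyi : y i = 0
    · simp [hyi, ← hsq i]
    · simp only [hyi, if_false, add_zero]
      rcases le_or_gt (lam i) 0 with h | h
      · have : mm i = lam i ^ 2 := by simp [hmmdef, min_eq_left h]
        rw [this]
        nlinarith [hy i]
      · have : mm i = 0 := by simp [hmmdef, min_eq_right h.le]
        rw [this]; exact sq_nonneg _
  -- support finset
  set S : Finset (Fin N) := Finset.univ.filter (fun i => y i ≠ 0) with hSdef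
  have hScard : S.card ≤ r := by
    have : {i : Fin N | y i ≠ 0}.ncard = S.card := by
      rw [Set.ncard_eq_toFinset_card']
      congr 1
      ext i
      simp [hSdef]
    omega
  have hkey : ∑ i ∈ Finset.univ.filter (fun i : Fin N => ¬ (i : ℕ) < r), p i
      ≤ ∑ i ∈ Finset.univ.filter (fun i : Fin N => y i = 0), p i := by
    have h1 := Finset.sum_filter_add_sum_filter_not Finset.univ
      (fun i : Fin N => (i : ℕ) < r) p
    have h2 := Finset.sum_filter_add_sum_filter_not Finset.univ
      (fun i : Fin N => y i ≠ 0) p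
    have h3 : ∑ i ∈ S, p i
        ≤ ∑ i ∈ Finset.univ.filter (fun i : Fin N => (i : ℕ) < r), p i :=
      aux_sum_le hrN p hpanti hpnn S hScard
    have h4 : Finset.univ.filter (fun i : Fin N => ¬ y i ≠ 0)
        = Finset.univ.filter (fun i : Fin N => y i = 0) := by
      ext i; simp
    rw [hSdef] at h3
    rw [h4] at h2
    linarith
  calc ∑ i, (lam i - ystar i) ^ 2
      = ∑ i, (mm i + (if ¬ (i : ℕ) < r then p i else 0)) :=
        Finset.sum_congr rfl fun i _ => hL i
    _ = ∑ i, mm i + ∑ i ∈ Finset.univ.filter (fun i : Fin N => ¬ (i : ℕ) < r), p i := by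
        rw [Finset.sum_add_distrib, Finset.sum_filter]
    _ ≤ ∑ i, mm i + ∑ i ∈ Finset.univ.filter (fun i : Fin N => y i = 0), p i := by
        linarith [hkey]
    _ = ∑ i, (mm i + (if y i = 0 then p i else 0)) := by
        rw [Finset.sum_add_distrib, Finset.sum_filter]
    _ ≤ ∑ i, (lam i - y i) ^ 2 := Finset.sum_le_sum fun i _ => hR i
end

section
/- Let v₀, v₁, …, v_N ∈ ℝ². Then max over x ∈ {−1,1}ᴺ of ‖v₀ + Σ_{n=1}^N xₙ vₙ‖₂² equals max over unit vectors a ∈ ℝ² (‖a‖₂ = 1) of (Σ_{n=0}^N |vₙᵀa|)². -/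
open Matrix BigOperators

/-- Euclidean norm of a real vector. -/
noncomputable def vnorm {n : ℕ} (v : Fin n → ℝ) : ℝ := Real.sqrt (∑ i, v i ^ 2)

lemma vnorm_sq {n : ℕ} (w : Fin n → ℝ) : vnorm w ^ 2 = ∑ i, w i ^ 2 :=
  Real.sq_sqrt (Finset.sum_nonneg fun _ _ => sq_nonneg _)

lemma vnorm_nonneg {n : ℕ} (w : Fin n → ℝ) : 0 ≤ vnorm w := Real.sqrt_nonneg _

lemma continuous_vnorm {n : ℕ} : Continuous (vnorm (n := n)) := by
  unfold vnorm
  exact Real.continuous_sqrt.comp (by fun_prop)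

lemma cs2 (w a : Fin 2 → ℝ) : (w ⬝ᵥ a) ^ 2 ≤ vnorm w ^ 2 * vnorm a ^ 2 := by
  rw [vnorm_sq, vnorm_sq]
  simp only [dotProduct, Fin.sum_univ_two]
  nlinarith [sq_nonneg (w 0 * a 1 - w 1 * a 0)]

lemma vnorm_smul {n : ℕ} (c : ℝ) (w : Fin n → ℝ) : vnorm (c • w) = |c| * vnorm w := by
  unfold vnorm
  rw [← Real.sqrt_sq_eq_abs, ← Real.sqrt_mul (sq_nonneg c), Finset.mul_sum]
  congr 1
  exact Finset.sum_congr rfl fun i _ => by simp [mul_pow]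

lemma dot_expand {N : ℕ} (v0 : Fin 2 → ℝ) (v : Fin N → Fin 2 → ℝ) (x : Fin N → ℝ) (a : Fin 2 → ℝ) :
    (v0 + ∑ n, x n • v n) ⬝ᵥ a = v0 ⬝ᵥ a + ∑ n, x n * (v n ⬝ᵥ a) := by
  simp only [dotProduct, Pi.add_apply, Finset.sum_apply, Pi.smul_apply, smul_eq_mul,
    add_mul, Finset.sum_add_distrib, Finset.sum_mul, Finset.mul_sum, mul_assoc]
  rw [Finset.sum_comm]

lemma dot_self {n : ℕ} (w : Fin n → ℝ) : w ⬝ᵥ w = vnorm w ^ 2 := by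
  rw [vnorm_sq]; simp [dotProduct, sq]

/-- The binary quadratic maximization over the hypercube equals the maximization
of `g(a) = Σ |vₙᵀ a|` squared over the unit circle. -/
theorem stmt8 (N : ℕ) (v0 : Fin 2 → ℝ) (v : Fin N → Fin 2 → ℝ) :
    ∃ m : ℝ,
      IsGreatest {t | ∃ x : Fin N → ℝ, (∀ n, x n = 1 ∨ x n = -1) ∧
        t = vnorm (v0 + ∑ n, x n • v n) ^ 2} m ∧
      IsGreatest {t | ∃ a : Fin 2 → ℝ, vnorm a = 1 ∧
        t = (|v0 ⬝ᵥ a| + ∑ n, |v n ⬝ᵥ a|) ^ 2} m := by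
  classical
  set F : (Fin N → ℝ) → ℝ := fun x => vnorm (v0 + ∑ n, x n • v n) ^ 2 with hF
  set G : (Fin 2 → ℝ) → ℝ := fun a => (|v0 ⬝ᵥ a| + ∑ n, |v n ⬝ᵥ a|) ^ 2 with hG
  set A : Set (Fin N → ℝ) := {x | ∀ n, x n = 1 ∨ x n = -1} with hA
  set B : Set (Fin 2 → ℝ) := {a | vnorm a = 1} with hB
  -- compactness of A
  have hAc : IsCompact A := by
    have hEq : A = Set.pi Set.univ (fun _ : Fin N => ({1, -1} : Set ℝ)) := by
      ext x; simp [hA, Set.mem_pi]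
    rw [hEq]
    exact isCompact_univ_pi fun _ => (Set.toFinite _).isCompact
  -- compactness of B
  have hBcl : IsClosed B := isClosed_eq continuous_vnorm continuous_const
  have hBc : IsCompact B := by
    refine (isCompact_univ_pi fun _ : Fin 2 => isCompact_Icc (a := (-1:ℝ)) (b := 1)).of_isClosed_subset hBcl ?_
    intro a ha i _
    have h1 : a i ^ 2 ≤ 1 := by
      have h2 : a i ^ 2 ≤ ∑ j, a j ^ 2 :=
        Finset.single_le_sum (fun j _ => sq_nonneg (a j)) (Finset.mem_univ i)
      have h3 : (∑ j, a j ^ 2) = 1 := by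
        have := vnorm_sq a
        rw [ha] at this
        simpa using this.symm
      linarith
    constructor <;> nlinarith
  -- continuity of F and G
  have hdotc : ∀ (u : Fin 2 → ℝ), Continuous fun a : Fin 2 → ℝ => u ⬝ᵥ a := by
    intro u
    unfold dotProduct
    exact continuous_finset_sum _ fun i _ => continuous_const.mul (continuous_apply i)
  have hFc : Continuous F := by
    apply Continuous.pow
    exact continuous_vnorm.comp (by fun_prop)
  have hGc : Continuous G := by
    apply Continuous.pow
    apply Continuous.add
    · exact continuous_abs.comp (hdotc v0)
    · exact continuous_finset_sum _ fun n _ => continuous_abs.comp (hdotc (v n))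
  -- nonemptiness
  have hAne : A.Nonempty := ⟨fun _ => 1, fun _ => Or.inl rfl⟩
  have hBne : B.Nonempty := by
    refine ⟨![1, 0], ?_⟩
    simp [hB, vnorm, Fin.sum_univ_two]
  obtain ⟨x₀, hx₀A, hx₀max⟩ := hAc.exists_isMaxOn hAne hFc.continuousOn
  obtain ⟨a₀, ha₀B, ha₀max⟩ := hBc.exists_isMaxOn hBne hGc.continuousOn
  -- F x₀ ≤ G a₀
  have h1 : F x₀ ≤ G a₀ := by
    set w : Fin 2 → ℝ := v0 + ∑ n, x₀ n • v n with hw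
    by_cases hw0 : vnorm w = 0
    · have : F x₀ = 0 := by rw [hF]; simp [← hw, hw0]
      rw [this, hG]
      exact sq_nonneg _
    · have hwpos : 0 < vnorm w := lt_of_le_of_ne (vnorm_nonneg w) (Ne.symm hw0)
      set a : Fin 2 → ℝ := (vnorm w)⁻¹ • w with ha
      have haB : a ∈ B := by
        rw [hB, Set.mem_setOf_eq, ha, vnorm_smul, abs_of_pos (inv_pos.mpr hwpos),
          inv_mul_cancel₀ hw0]
      have hdot : w ⬝ᵥ a = vnorm w := by
        rw [ha, dotProduct_smul, smul_eq_mul, dot_self, sq]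
        field_simp
      have key : vnorm w ≤ |v0 ⬝ᵥ a| + ∑ n, |v n ⬝ᵥ a| := by
        rw [← hdot, hw, dot_expand]
        refine add_le_add (le_abs_self _) (Finset.sum_le_sum fun n _ => ?_)
        rcases hx₀A n with h | h
        · rw [h, one_mul]; exact le_abs_self _
        · rw [h, neg_one_mul]; exact neg_le_abs _
      have hFle : F x₀ ≤ G a := by
        show vnorm (v0 + ∑ n, x₀ n • v n) ^ 2 ≤ (|v0 ⬝ᵥ a| + ∑ n, |v n ⬝ᵥ a|) ^ 2
        rw [← hw]
        exact pow_le_pow_left₀ (vnorm_nonneg w) key 2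
      exact hFle.trans (ha₀max haB)
  -- G a₀ ≤ F x₀
  have h2 : G a₀ ≤ F x₀ := by
    set s : ℝ := if 0 ≤ v0 ⬝ᵥ a₀ then 1 else -1 with hs
    set x : Fin N → ℝ := fun n => s * (if 0 ≤ v n ⬝ᵥ a₀ then 1 else -1) with hx
    have hs2 : s * s = 1 := by rw [hs]; split <;> norm_num
    have hxA : x ∈ A := by
      intro n
      show s * (if 0 ≤ v n ⬝ᵥ a₀ then (1:ℝ) else -1) = 1 ∨
        s * (if 0 ≤ v n ⬝ᵥ a₀ then (1:ℝ) else -1) = -1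
      rw [hs]
      rcases le_or_gt 0 (v0 ⬝ᵥ a₀) with h | h <;> rcases le_or_gt 0 (v n ⬝ᵥ a₀) with h' | h'
      · left; rw [if_pos h, if_pos h']; norm_num
      · right; rw [if_pos h, if_neg (not_le.mpr h')]; norm_num
      · right; rw [if_neg (not_le.mpr h), if_pos h']; norm_num
      · left; rw [if_neg (not_le.mpr h), if_neg (not_le.mpr h')]; norm_num
    have hsv0 : v0 ⬝ᵥ a₀ = s * |v0 ⬝ᵥ a₀| := by
      rw [hs]; rcases le_or_gt 0 (v0 ⬝ᵥ a₀) with h | h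
      · rw [if_pos h, one_mul, abs_of_nonneg h]
      · rw [if_neg (not_le.mpr h), abs_of_neg h]; ring
    have hsvn : ∀ n, x n * (v n ⬝ᵥ a₀) = s * |v n ⬝ᵥ a₀| := by
      intro n
      show s * (if 0 ≤ v n ⬝ᵥ a₀ then (1:ℝ) else -1) * (v n ⬝ᵥ a₀) = s * |v n ⬝ᵥ a₀|
      rcases le_or_gt 0 (v n ⬝ᵥ a₀) with h | h
      · rw [if_pos h, abs_of_nonneg h]; ring
      · rw [if_neg (not_le.mpr h), abs_of_neg h]; ring
    have hdot : (v0 + ∑ n, x n • v n) ⬝ᵥ a₀ = s * (|v0 ⬝ᵥ a₀| + ∑ n, |v n ⬝ᵥ a₀|) := by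
      have hsum : (∑ n, x n * (v n ⬝ᵥ a₀)) = s * ∑ n, |v n ⬝ᵥ a₀| := by
        rw [Finset.sum_congr rfl fun n _ => hsvn n, ← Finset.mul_sum]
      rw [dot_expand, hsum]
      linear_combination hsv0
    have ha₀1 : vnorm a₀ = 1 := ha₀B
    have hGval : G a₀ = ((v0 + ∑ n, x n • v n) ⬝ᵥ a₀) ^ 2 := by
      rw [hG, hdot, mul_pow]
      have : s ^ 2 = 1 := by rw [sq, hs2]
      rw [this, one_mul]
    have hle : G a₀ ≤ F x := by
      rw [hGval, hF]
      calc ((v0 + ∑ n, x n • v n) ⬝ᵥ a₀) ^ 2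
          ≤ vnorm (v0 + ∑ n, x n • v n) ^ 2 * vnorm a₀ ^ 2 := cs2 _ _
        _ = vnorm (v0 + ∑ n, x n • v n) ^ 2 := by rw [ha₀1]; ring
    exact hle.trans (hx₀max hxA)
  have heq : F x₀ = G a₀ := le_antisymm h1 h2
  refine ⟨F x₀, ⟨⟨x₀, hx₀A, rfl⟩, ?_⟩, ?_⟩
  · rintro t ⟨x, hxA, rfl⟩
    exact hx₀max hxA
  · rw [heq]
    exact ⟨⟨a₀, ha₀B, rfl⟩, by rintro t ⟨a, haB, rfl⟩; exact ha₀max haB⟩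
end

section
/- Let v₀, v₁, …, v_N ∈ ℝ², not all zero, and define g(a) = Σ_{n=0}^N |vₙᵀa| for a ∈ ℝ². Suppose a⋆ is a maximizer of g over the unit circle {a ∈ ℝ² : ‖a‖₂ = 1} such that vₙᵀa⋆ ≠ 0 for every n with vₙ ≠ 0. Then, with w = Σ_{n=0}^N sgn(vₙᵀa⋆)·vₙ, one has w ≠ 0 and a⋆ = w / ‖w‖₂. Consequently, the maximum of g over the unit circle is attained either at a unit vector orthogonal to some nonzero vₙ, or at a normalized signed sum w/‖w‖₂ of the vectors vₙ. -/
open Matrix BigOperators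

lemma vnorm_two (a : Fin 2 → ℝ) : vnorm a = Real.sqrt (a 0 ^ 2 + a 1 ^ 2) := by
  simp [vnorm, Fin.sum_univ_two]

lemma unit_sq {a : Fin 2 → ℝ} (h : vnorm a = 1) : a 0 ^ 2 + a 1 ^ 2 = 1 := by
  rw [vnorm_two] at h
  exact Real.sqrt_eq_one.mp h

lemma realSign_mul_self (x : ℝ) : Real.sign x * x = |x| := by
  rcases lt_trichotomy x 0 with h | h | h
  · rw [Real.sign_of_neg h, abs_of_neg h]; ring
  · simp [h]
  · rw [Real.sign_of_pos h, abs_of_pos h]; ring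

lemma sign_mul_le (x t : ℝ) : Real.sign x * t ≤ |t| := by
  rcases Real.sign_apply_eq x with h | h | h <;> rw [h]
  · nlinarith [neg_abs_le t]
  · simp [abs_nonneg t]
  · nlinarith [le_abs_self t]

/-- Structure of maximizers of `g(a) = Σₙ |vₙᵀ a|` on the unit circle:
a maximizer not orthogonal to any nonzero `vₙ` is the normalized signed sum;
consequently the maximum is attained either at a unit vector orthogonal to some
nonzero `vₙ`, or at a normalized signed sum. -/
theorem stmt9 (N : ℕ) (v : Fin (N + 1) → Fin 2 → ℝ) (hne : ∃ n, v n ≠ 0)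
    (astar : Fin 2 → ℝ) (hastar : vnorm astar = 1)
    (hmax : ∀ a : Fin 2 → ℝ, vnorm a = 1 →
      ∑ n, |v n ⬝ᵥ a| ≤ ∑ n, |v n ⬝ᵥ astar|)
    (hnz : ∀ n, v n ≠ 0 → v n ⬝ᵥ astar ≠ 0)
    (w : Fin 2 → ℝ) (hw : w = ∑ n, Real.sign (v n ⬝ᵥ astar) • v n) :
    (w ≠ 0 ∧ astar = (vnorm w)⁻¹ • w) ∧
      ∃ b : Fin 2 → ℝ, vnorm b = 1 ∧
        (∀ a : Fin 2 → ℝ, vnorm a = 1 → ∑ n, |v n ⬝ᵥ a| ≤ ∑ n, |v n ⬝ᵥ b|) ∧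
        ((∃ n, v n ≠ 0 ∧ v n ⬝ᵥ b = 0) ∨
          b = (vnorm (∑ n, Real.sign (v n ⬝ᵥ b) • v n))⁻¹ •
            ∑ n, Real.sign (v n ⬝ᵥ b) • v n) := by
  -- dot product of w with any a
  have hdot : ∀ a : Fin 2 → ℝ, w ⬝ᵥ a = ∑ n, Real.sign (v n ⬝ᵥ astar) * (v n ⬝ᵥ a) := by
    intro a
    rw [hw]
    simp only [dotProduct, Finset.sum_apply, Pi.smul_apply, smul_eq_mul,
      Finset.sum_mul, Finset.mul_sum]
    rw [Finset.sum_comm]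
    exact Finset.sum_congr rfl fun n _ => Finset.sum_congr rfl fun i _ => by ring
  -- s = g(astar)
  have h1 : w ⬝ᵥ astar = ∑ n, |v n ⬝ᵥ astar| := by
    rw [hdot]
    exact Finset.sum_congr rfl fun n _ => realSign_mul_self _
  -- g(astar) > 0
  have h2 : 0 < ∑ n, |v n ⬝ᵥ astar| := by
    obtain ⟨n, hn⟩ := hne
    exact Finset.sum_pos' (fun m _ => abs_nonneg _)
      ⟨n, Finset.mem_univ n, abs_pos.mpr (hnz n hn)⟩
  have hspos : 0 < w ⬝ᵥ astar := h1 ▸ h2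
  have hwne : w ≠ 0 := by
    rintro rfl
    rw [zero_dotProduct] at hspos
    exact lt_irrefl 0 hspos
  -- norm of w is positive
  have hwsq : 0 < w 0 ^ 2 + w 1 ^ 2 := by
    rcases (not_and_or.mp (fun h : w 0 = 0 ∧ w 1 = 0 => hwne (funext fun i => by
      fin_cases i <;> simp [h.1, h.2]))) with h | h <;> positivity
  set W := vnorm w with hWdef
  have hWpos : 0 < W := by
    rw [hWdef, vnorm_two]; positivity
  have hW2 : W ^ 2 = w 0 ^ 2 + w 1 ^ 2 := by
    rw [hWdef, vnorm_two, Real.sq_sqrt (le_of_lt hwsq)]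
  -- the normalized vector u
  set u : Fin 2 → ℝ := W⁻¹ • w with hu
  have hui : ∀ i, u i = W⁻¹ * w i := fun i => rfl
  have huunit : vnorm u = 1 := by
    rw [vnorm_two, hui, hui]
    rw [show (W⁻¹ * w 0) ^ 2 + (W⁻¹ * w 1) ^ 2 = (W⁻¹)^2 * (w 0 ^2 + w 1 ^2) by ring,
      ← hW2]
    rw [show (W⁻¹)^2 * W^2 = (W⁻¹ * W)^2 by ring, inv_mul_cancel₀ (ne_of_gt hWpos)]
    simp
  -- w ⬝ᵥ u = W
  have hwu : w ⬝ᵥ u = W := by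
    have : w ⬝ᵥ u = W⁻¹ * (w 0 ^ 2 + w 1 ^ 2) := by
      simp [dotProduct, Fin.sum_univ_two, hui]; ring
    rw [this, ← hW2]
    field_simp
  -- g(u) ≥ W
  have hgu : W ≤ ∑ n, |v n ⬝ᵥ u| := by
    calc W = w ⬝ᵥ u := hwu.symm
      _ = ∑ n, Real.sign (v n ⬝ᵥ astar) * (v n ⬝ᵥ u) := hdot u
      _ ≤ ∑ n, |v n ⬝ᵥ u| := Finset.sum_le_sum fun n _ => sign_mul_le _ _
  have hWle : W ≤ w ⬝ᵥ astar := by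
    calc W ≤ ∑ n, |v n ⬝ᵥ u| := hgu
      _ ≤ ∑ n, |v n ⬝ᵥ astar| := hmax u huunit
      _ = w ⬝ᵥ astar := h1.symm
  -- Cauchy–Schwarz: w ⬝ᵥ astar ≤ W
  have haunit : astar 0 ^ 2 + astar 1 ^ 2 = 1 := unit_sq hastar
  have hda : w ⬝ᵥ astar = w 0 * astar 0 + w 1 * astar 1 := by
    simp [dotProduct, Fin.sum_univ_two]
  have hCS : w ⬝ᵥ astar ≤ W := by
    rw [hda]
    nlinarith [sq_nonneg (w 0 * astar 1 - w 1 * astar 0), hW2, hWpos, hda ▸ hspos]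
  have hseq : w ⬝ᵥ astar = W := le_antisymm hCS hWle
  -- equality case of Cauchy–Schwarz
  have hkey : (W * astar 0 - w 0) ^ 2 + (W * astar 1 - w 1) ^ 2 = 0 := by
    rw [hda] at hseq
    nlinarith [hW2, haunit]
  have h0 : W * astar 0 = w 0 := by
    have hs0 : (W * astar 0 - w 0) ^ 2 = 0 := by
      have := sq_nonneg (W * astar 0 - w 0)
      have := sq_nonneg (W * astar 1 - w 1)
      linarith
    have := (pow_eq_zero_iff two_ne_zero).mp hs0
    linarith
  have h1' : W * astar 1 = w 1 := by
    have hs1 : (W * astar 1 - w 1) ^ 2 = 0 := by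
      have := sq_nonneg (W * astar 0 - w 0)
      have := sq_nonneg (W * astar 1 - w 1)
      linarith
    have := (pow_eq_zero_iff two_ne_zero).mp hs1
    linarith
  have hastar_eq : astar = W⁻¹ • w := by
    funext i
    fin_cases i
    · show astar 0 = (W⁻¹ • w) 0
      rw [Pi.smul_apply, smul_eq_mul, ← h0, inv_mul_cancel_left₀ (ne_of_gt hWpos)]
    · show astar 1 = (W⁻¹ • w) 1
      rw [Pi.smul_apply, smul_eq_mul, ← h1', inv_mul_cancel_left₀ (ne_of_gt hWpos)]
  refine ⟨⟨hwne, hastar_eq⟩, astar, hastar, hmax, Or.inr ?_⟩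
  rw [← hw, ← hWdef]
  exact hastar_eq
end
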